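/- Let p = p_1 + p_2 and let φ = (φ_1, φ_2) be defined by κ^{(p)}(j) = (κ^{(p_1)}(φ_1(j)), κ^{(p_2)}(φ_2(j))). Let A = (a_j) ⊆ ℂ^{p_1} and B = (b_j) ⊆ ℂ^{p_2} be sequences such that for every j ≥ 1 the arrays A_j = (a_0,…,a_{j−1}) and B_j = (b_0,…,b_{j−1}) are completely ordered unisolvent, and let Ω = A ⊕ B with ω_j = (a_{φ_1(j)}, b_{φ_2(j)}). Then for every j ≥ 1, writing r = φ_1(j), s = φ_2(j), and z = (z^1, z^2) ∈ ℂ^{p_1} × ℂ^{p_2}: (i) if r > 0 and s > 0, then vdm(ω_0,…,ω_{j−1}, z)·vdm(a_0,…,a_{r−1})·vdm(b_0,…,b_{s−1}) = vdm(ω_0,…,ω_{j−1})·vdm(a_0,…,a_{r−1}, z^1)·vdm(b_0,…,b_{s−1}, z^2); (ii) if r > 0 and s = 0, then vdm(ω_0,…,ω_{j−1}, z)·vdm(a_0,…,a_{r−1}) = vdm(ω_0,…,ω_{j−1})·vdm(a_0,…,a_{r−1}, z^1); (iii) if r = 0 and s > 0, then vdm(ω_0,…,ω_{j−1}, z)·vdm(b_0,…,b_{s−1})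 = vdm(ω_0,…,ω_{j−1})·vdm(b_0,…,b_{s−1}, z^2). -/

import Mathlib

open scoped BigOperators
open Filter

namespace PseudoLeja

/-- Graded lexicographic strict order on multi-indices in `ℕ^p`:
`α ≺ β` iff `|α| < |β|`, or `|α| = |β|` and the leftmost nonzero entry of `α - β`
is negative (i.e. at the first index where they differ, `α` is smaller). -/
def GLexLT {p : ℕ} (α β : Fin p → ℕ) : Prop :=
  (∑ i, α i) < (∑ i, β i) ∨
    ((∑ i, α i) = (∑ i, β i) ∧ ∃ k, (∀ i, i < k → α i = β i) ∧ α k < β k)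

/-- `κ : ℕ → ℕ^p` is the (unique) enumeration of all multi-indices that is strictly
increasing from the usual order on `ℕ` to the graded lexicographic order. -/
def IsGLexEnum {p : ℕ} (κ : ℕ → Fin p → ℕ) : Prop :=
  Function.Bijective κ ∧ ∀ m n : ℕ, m < n → GLexLT (κ m) (κ n)

/-- The `N`-th monomial `e_N(z) = z^{κ(N)}`. -/
noncomputable def mono {p : ℕ} (κ : ℕ → Fin p → ℕ) (N : ℕ) (z : Fin p → ℂ) : ℂ :=
  ∏ i, z i ^ κ N i

/-- Vandermonde determinant of the points `ξ 0, …, ξ (n-1)`: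
`vdm κ n ξ = det [e_N(ξ_M)]_{0 ≤ M, N ≤ n-1}`. -/
noncomputable def vdm {p : ℕ} (κ : ℕ → Fin p → ℕ) (n : ℕ) (ξ : ℕ → Fin p → ℂ) : ℂ :=
  Matrix.det (Matrix.of fun M N : Fin n => mono κ (N : ℕ) (ξ (M : ℕ)))

/-- A set `K ⊆ ℂ^p` is determining if no nonzero polynomial in `p` complex
variables vanishes identically on `K`. -/
def Determining {p : ℕ} (K : Set (Fin p → ℂ)) : Prop :=
  ∀ P : MvPolynomial (Fin p) ℂ, (∀ z ∈ K, MvPolynomial.eval z P = 0) → P = 0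

/-- `h_d = C(p+d, d)`, the dimension of the space of polynomials of total degree
at most `d` in `p` variables. -/
def hdim (p d : ℕ) : ℕ := Nat.choose (p + d) d

/-- `l_d = p·C(p+d, p+1)`, the degree of the Vandermonde determinant of `h_d` points. -/
def ldim (p d : ℕ) : ℕ := p * Nat.choose (p + d) (p + 1)

/-- `V_j(K)`, the maximal modulus of the Vandermonde determinant of `j` points of `K`. -/
noncomputable def Vsup {p : ℕ} (κ : ℕ → Fin p → ℕ) (K : Set (Fin p → ℂ)) (j : ℕ) : ℝ :=
  sSup { v : ℝ | ∃ ξ : ℕ → Fin p → ℂ, (∀ i, ξ i ∈ K) ∧ v = ‖vdm κ j ξ‖ }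

/-- `(ξ_j)_{j≥0} ⊆ K` is a pseudo Leja sequence for `K` with Edrei growth `(M_j)_{j≥1}`:
`M_j ≥ 1`, `M_j·|vdm(ξ_0,…,ξ_j)| ≥ max_{z∈K} |vdm(ξ_0,…,ξ_{j-1},z)|` for `j ≥ 1`, and
`lim_{d→∞} (max_{h_{d-1} ≤ j < h_d} M_j)^{1/d} = 1`. -/
def IsPseudoLeja {p : ℕ} (κ : ℕ → Fin p → ℕ) (K : Set (Fin p → ℂ))
    (ξ : ℕ → Fin p → ℂ) (M : ℕ → ℝ) : Prop :=
  (∀ j, ξ j ∈ K) ∧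
  (∀ j, 1 ≤ j → 1 ≤ M j) ∧
  (∀ j, 1 ≤ j → ∀ z ∈ K,
    ‖vdm κ (j + 1) (Function.update ξ j z)‖ ≤
      M j * ‖vdm κ (j + 1) ξ‖) ∧
  Filter.Tendsto
    (fun d : ℕ => (sSup (M '' Set.Ico (hdim p (d - 1)) (hdim p d))) ^ ((d : ℝ)⁻¹))
    Filter.atTop (nhds 1)


/-!
Put `r = φ₁ j`, `s = φ₂ j` and consider, as a function of `w = (w¹, w²)`,
`F(w) = vdm(ω_0,…,ω_{j-1}, w)·vdm(a_0,…,a_{r-1})·vdm(b_0,…,b_{s-1})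
  - vdm(ω_0,…,ω_{j-1})·vdm(a_0,…,a_{r-1}, w¹)·vdm(b_0,…,b_{s-1}, w²)`.
Expanding each determinant along its last row gives its leading coefficient times the top monomial
plus lower monomials. Since `e_r(w¹)·e_s(w²) = e_j(w)`, and every other product `e_m(w¹)·e_n(w²)`
with `m ≤ r`, `n ≤ s` is some `e_N(w)` with `N < j` (the graded lexicographic order is monotone
under concatenation), the leading terms cancel and `F` is a combination of `e_0, …, e_{j-1}`.
Every `ω_M` with `M < j` has `φ₁ M < r` or `φ₂ M < s`, so `F` vanishes at `ω_0, …, ω_{j-1}`;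
as these points are unisolvent, `F = 0`. Their unisolvence follows by induction on `j` from the
same identity evaluated at `w = ω_j`.
-/

def GLexLE {p : ℕ} (α β : Fin p → ℕ) : Prop := GLexLT α β ∨ α = β

theorem GLexLT.asymm {p : ℕ} {α β : Fin p → ℕ} (hαβ : GLexLT α β) : ¬ GLexLT β α := by
  rintro (h' | ⟨h', k', hk', hlt'⟩) <;> rcases hαβ with h | ⟨h, k, hk, hlt⟩
  all_goals try omega
  rcases lt_trichotomy k k' with h | rfl | h
  · exact absurd (hk' k h) (by omega)
  · omega
  · exact absurd (hk k' h) (by omega)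

theorem GLexLE.sum_le {p : ℕ} {α β : Fin p → ℕ} (h : GLexLE α β) : ∑ i, α i ≤ ∑ i, β i := by
  rcases h with (h | ⟨h, -⟩) | rfl <;> omega

namespace IsGLexEnum

variable {p : ℕ} {κ : ℕ → Fin p → ℕ}

theorem glexLE_of_le (hκ : IsGLexEnum κ) {m n : ℕ} (h : m ≤ n) : GLexLE (κ m) (κ n) := by
  rcases h.eq_or_lt with rfl | h
  · exact Or.inr rfl
  · exact Or.inl (hκ.2 m n h)

theorem le_of_glexLE (hκ : IsGLexEnum κ) {m n : ℕ} (h : GLexLE (κ m) (κ n)) : m ≤ n := by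
  by_contra! hnm
  rcases h with h | h
  · exact h.asymm (hκ.2 n m hnm)
  · exact (hκ.2 n m hnm).asymm (h ▸ hκ.2 n m hnm)

theorem apply_zero (hκ : IsGLexEnum κ) : κ 0 = 0 := by
  obtain ⟨m, hm⟩ := hκ.1.2 0
  rcases Nat.eq_zero_or_pos m with rfl | hm₀
  · exact hm
  · rcases hm ▸ hκ.2 0 m hm₀ with h | ⟨-, k, -, hk⟩ <;> simp at *

end IsGLexEnum

section Append

variable {p₁ p₂ : ℕ}

theorem sum_append (α : Fin p₁ → ℕ) (β : Fin p₂ → ℕ) :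
    ∑ i, Fin.append α β i = ∑ i, α i + ∑ i, β i := by
  simp [Fin.sum_univ_add]

theorem GLexLT.append_left {α α' : Fin p₁ → ℕ} {β β' : Fin p₂ → ℕ}
    (hα : GLexLT α α') (hβ : GLexLE β β') : GLexLT (Fin.append α β) (Fin.append α' β') := by
  have hsum := hβ.sum_le
  simp only [GLexLT, sum_append]
  rcases hα with h | ⟨hα, k, hk, hlt⟩
  · omega
  rcases hsum.lt_or_eq with h | h
  · omega
  refine Or.inr ⟨by omega, Fin.castAdd p₂ k, fun i hi => ?_, by simpa⟩
  induction i using Fin.addCases with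
  | left i => simpa using hk i (by rw [Fin.lt_def] at hi ⊢; simpa using hi)
  | right i => exact absurd hi (by simp [Fin.lt_def]; omega)

theorem GLexLT.append_right (α : Fin p₁ → ℕ) {β β' : Fin p₂ → ℕ} (hβ : GLexLT β β') :
    GLexLT (Fin.append α β) (Fin.append α β') := by
  simp only [GLexLT, sum_append]
  rcases hβ with h | ⟨hβ, k, hk, hlt⟩
  · omega
  refine Or.inr ⟨by omega, Fin.natAdd p₁ k, fun i hi => ?_, by simpa⟩
  induction i using Fin.addCases with
  | left i => simp
  | right i => simpa using hk i (by simpa using hi)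

theorem GLexLE.append {α α' : Fin p₁ → ℕ} {β β' : Fin p₂ → ℕ}
    (hα : GLexLE α α') (hβ : GLexLE β β') : GLexLE (Fin.append α β) (Fin.append α' β') := by
  rcases hα with hα | rfl
  · exact Or.inl (hα.append_left hβ)
  rcases hβ with hβ | rfl
  · exact Or.inl (hβ.append_right α)
  · exact Or.inr rfl

end Append

section Vandermonde

variable {p : ℕ}

noncomputable def monoSpan (κ : ℕ → Fin p → ℕ) (n : ℕ) : Submodule ℂ ((Fin p → ℂ) → ℂ) :=
  Submodule.span ℂ (Set.range fun N : Fin n => mono κ N)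

theorem mono_mem_monoSpan (κ : ℕ → Fin p → ℕ) {N n : ℕ} (h : N < n) : mono κ N ∈ monoSpan κ n :=
  Submodule.subset_span ⟨⟨N, h⟩, rfl⟩

theorem monoSpan_mono (κ : ℕ → Fin p → ℕ) {m n : ℕ} (h : m ≤ n) : monoSpan κ m ≤ monoSpan κ n :=
  Submodule.span_le.2 <| Set.range_subset_iff.2 fun N => mono_mem_monoSpan κ (N.2.trans_le h)

theorem vdm_zero (κ : ℕ → Fin p → ℕ) (ξ : ℕ → Fin p → ℂ) : vdm κ 0 ξ = 1 :=
  Matrix.det_fin_zero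

theorem vdm_one {κ : ℕ → Fin p → ℕ} (hκ : κ 0 = 0) (ξ : ℕ → Fin p → ℂ) : vdm κ 1 ξ = 1 := by
  simp [vdm, mono, hκ]

theorem vdm_update_self_of_lt (κ : ℕ → Fin p → ℕ) (ξ : ℕ → Fin p → ℂ) {m n : ℕ} (h : m < n) :
    vdm κ (n + 1) (Function.update ξ n (ξ m)) = 0 := by
  refine Matrix.det_zero_of_row_eq (i := ⟨m, by omega⟩) (j := Fin.last n)
    (by simp [Fin.ext_iff, h.ne]) (funext fun N => ?_)
  simp [Function.update_of_ne h.ne]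

/-- Laplace expansion along the last row. -/
theorem vdm_update_sub_mem_monoSpan (κ : ℕ → Fin p → ℕ) (n : ℕ) (ξ : ℕ → Fin p → ℂ) :
    (fun w => vdm κ (n + 1) (Function.update ξ n w)) - vdm κ n ξ • mono κ n ∈ monoSpan κ n := by
  refine (Submodule.mem_span_range_iff_exists_fun ℂ).2 ⟨fun N => (-1) ^ (n + N : ℕ) *
    Matrix.det (Matrix.of fun M N' : Fin n => mono κ (N.castSucc.succAbove N') (ξ M)), ?_⟩
  funext w
  have hrow : ∀ M : Fin n, Function.update ξ n w M = ξ M := fun M =>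
    Function.update_of_ne M.2.ne _ _
  simp only [Pi.sub_apply, Finset.sum_apply, Pi.smul_apply, smul_eq_mul, vdm,
    Matrix.det_succ_row _ (Fin.last n), Fin.sum_univ_castSucc, Matrix.of_apply, Matrix.submatrix,
    Fin.val_last, Fin.val_castSucc, Fin.succAbove_last, Function.update_self, Even.add_self,
    Even.neg_pow, one_pow, one_mul, hrow]
  rw [mul_comm (mono κ n w), add_sub_cancel_right]
  exact Fintype.sum_congr _ _ fun _ => by ring

theorem vdm_update_mem_monoSpan (κ : ℕ → Fin p → ℕ) (n : ℕ) (ξ : ℕ → Fin p → ℂ) :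
    (fun w => vdm κ (n + 1) (Function.update ξ n w)) ∈ monoSpan κ (n + 1) := by
  simpa using add_mem (monoSpan_mono κ n.le_succ (vdm_update_sub_mem_monoSpan κ n ξ))
    (Submodule.smul_mem _ (vdm κ n ξ) (mono_mem_monoSpan κ n.lt_succ_self))

theorem eq_zero_of_mem_monoSpan {κ : ℕ → Fin p → ℕ} {n : ℕ} {ξ : ℕ → Fin p → ℂ}
    {f : (Fin p → ℂ) → ℂ} (hf : f ∈ monoSpan κ n) (hξ : vdm κ n ξ ≠ 0)
    (hfξ : ∀ m < n, f (ξ m) = 0) : f = 0 := by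
  obtain ⟨c, rfl⟩ := (Submodule.mem_span_range_iff_exists_fun ℂ).1 hf
  have hc : (Matrix.of fun M N : Fin n => mono κ N (ξ M)).mulVec c = 0 := by
    funext M
    simpa [Matrix.mulVec, dotProduct, mul_comm] using hfξ M M.2
  simp [Matrix.eq_zero_of_mulVec_eq_zero hξ hc]

theorem vdm_ne_zero_of_one_le {κ : ℕ → Fin p → ℕ} {ξ : ℕ → Fin p → ℂ}
    (hξ : ∀ n, 1 ≤ n → vdm κ n ξ ≠ 0) : ∀ n, vdm κ n ξ ≠ 0
  | 0 => by simp [vdm_zero]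
  | n + 1 => hξ (n + 1) n.succ_pos

end Vandermonde

section Tensor

variable {p₁ p₂ : ℕ}

def tensorFun (f : (Fin p₁ → ℂ) → ℂ) (g : (Fin p₂ → ℂ) → ℂ) : (Fin (p₁ + p₂) → ℂ) → ℂ :=
  fun w => f (fun i => w (Fin.castAdd p₂ i)) * g (fun i => w (Fin.natAdd p₁ i))

@[simp]
theorem tensorFun_append (f : (Fin p₁ → ℂ) → ℂ) (g : (Fin p₂ → ℂ) → ℂ) (z₁ : Fin p₁ → ℂ)
    (z₂ : Fin p₂ → ℂ) : tensorFun f g (Fin.append z₁ z₂) = f z₁ * g z₂ := by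
  simp [tensorFun]

theorem tensorFun_mono {κ₁ : ℕ → Fin p₁ → ℕ} {κ₂ : ℕ → Fin p₂ → ℕ} {κ : ℕ → Fin (p₁ + p₂) → ℕ}
    {m n N : ℕ} (h : κ N = Fin.append (κ₁ m) (κ₂ n)) :
    tensorFun (mono κ₁ m) (mono κ₂ n) = mono κ N := by
  funext w
  simp [tensorFun, mono, h, Fin.prod_univ_add]

theorem tensorFun_mem_monoSpan {κ₁ : ℕ → Fin p₁ → ℕ} {κ₂ : ℕ → Fin p₂ → ℕ}
    {κ : ℕ → Fin (p₁ + p₂) → ℕ} {m n k : ℕ}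
    (hk : ∀ m' < m, ∀ n' < n, ∃ N < k, κ N = Fin.append (κ₁ m') (κ₂ n'))
    {f : (Fin p₁ → ℂ) → ℂ} {g : (Fin p₂ → ℂ) → ℂ} (hf : f ∈ monoSpan κ₁ m)
    (hg : g ∈ monoSpan κ₂ n) : tensorFun f g ∈ monoSpan κ k := by
  obtain ⟨c, rfl⟩ := (Submodule.mem_span_range_iff_exists_fun ℂ).1 hf
  obtain ⟨d, rfl⟩ := (Submodule.mem_span_range_iff_exists_fun ℂ).1 hg
  have hexpand : tensorFun (∑ m', c m' • mono κ₁ m') (∑ n', d n' • mono κ₂ n') =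
      ∑ m', ∑ n', (c m' * d n') • tensorFun (mono κ₁ m') (mono κ₂ n') := by
    funext w
    simp [tensorFun, Finset.sum_mul_sum, mul_mul_mul_comm]
  rw [hexpand]
  refine Submodule.sum_mem _ fun m' _ => Submodule.sum_mem _ fun n' _ => Submodule.smul_mem _ _ ?_
  obtain ⟨N, hN, hκN⟩ := hk m' m'.2 n' n'.2
  exact tensorFun_mono hκN ▸ mono_mem_monoSpan κ hN

end Tensor

section Intertwining

variable {p₁ p₂ : ℕ} {κ₁ : ℕ → Fin p₁ → ℕ} {κ₂ : ℕ → Fin p₂ → ℕ} {κ : ℕ → Fin (p₁ + p₂) → ℕ}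
  {φ₁ φ₂ : ℕ → ℕ}

theorem lt_or_lt_of_lt_of_eq_append (hκ₁ : IsGLexEnum κ₁) (hκ₂ : IsGLexEnum κ₂)
    (hκ : IsGLexEnum κ) (hφ : ∀ j, κ j = Fin.append (κ₁ (φ₁ j)) (κ₂ (φ₂ j))) {M j : ℕ}
    (hM : M < j) : φ₁ M < φ₁ j ∨ φ₂ M < φ₂ j := by
  by_contra! h
  have : GLexLE (κ j) (κ M) := by
    rw [hφ j, hφ M]
    exact (hκ₁.glexLE_of_le h.1).append (hκ₂.glexLE_of_le h.2)
  exact absurd (hκ.le_of_glexLE this) hM.not_ge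

theorem exists_lt_eq_append (hκ₁ : IsGLexEnum κ₁) (hκ₂ : IsGLexEnum κ₂)
    (hκ : IsGLexEnum κ) (hφ : ∀ j, κ j = Fin.append (κ₁ (φ₁ j)) (κ₂ (φ₂ j))) {m n j : ℕ}
    (hm : m ≤ φ₁ j) (hn : n ≤ φ₂ j) (hlt : m < φ₁ j ∨ n < φ₂ j) :
    ∃ N < j, κ N = Fin.append (κ₁ m) (κ₂ n) := by
  obtain ⟨N, hN⟩ := hκ.1.2 (Fin.append (κ₁ m) (κ₂ n))
  have hNj : N ≤ j := hκ.le_of_glexLE <| by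
    rw [hN, hφ j]
    exact (hκ₁.glexLE_of_le hm).append (hκ₂.glexLE_of_le hn)
  refine ⟨N, hNj.lt_of_ne ?_, hN⟩
  rintro rfl
  have h := Prod.ext_iff.1 <| (Fin.appendEquiv p₁ p₂).injective
    (a₁ := (κ₁ m, κ₂ n)) (a₂ := (κ₁ (φ₁ N), κ₂ (φ₂ N))) (hN.symm.trans (hφ N))
  have := hκ₁.1.1 h.1
  have := hκ₂.1.1 h.2
  omega

theorem vdm_update_mul_sub_mem_monoSpan (hκ₁ : IsGLexEnum κ₁) (hκ₂ : IsGLexEnum κ₂)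
    (hκ : IsGLexEnum κ) (hφ : ∀ j, κ j = Fin.append (κ₁ (φ₁ j)) (κ₂ (φ₂ j)))
    (a : ℕ → Fin p₁ → ℂ) (b : ℕ → Fin p₂ → ℂ) (ω : ℕ → Fin (p₁ + p₂) → ℂ) (j : ℕ) :
    (fun w => vdm κ (j + 1) (Function.update ω j w) * (vdm κ₁ (φ₁ j) a * vdm κ₂ (φ₂ j) b)) -
      vdm κ j ω • tensorFun (fun z => vdm κ₁ (φ₁ j + 1) (Function.update a (φ₁ j) z))
        (fun z => vdm κ₂ (φ₂ j + 1) (Function.update b (φ₂ j) z)) ∈ monoSpan κ j := by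
  set r := φ₁ j
  set s := φ₂ j
  set V := fun w => vdm κ (j + 1) (Function.update ω j w)
  set A := fun z => vdm κ₁ (r + 1) (Function.update a r z)
  set B := fun z => vdm κ₂ (s + 1) (Function.update b s z)
  -- the top terms cancel because `e_r ⊗ e_s = e_j`
  have hsplit : (fun w => V w * (vdm κ₁ r a * vdm κ₂ s b)) - vdm κ j ω • tensorFun A B =
      (vdm κ₁ r a * vdm κ₂ s b) • (V - vdm κ j ω • mono κ j)
        - (vdm κ j ω * vdm κ₁ r a) • tensorFun (mono κ₁ r) (B - vdm κ₂ s b • mono κ₂ s)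
        - vdm κ j ω • tensorFun (A - vdm κ₁ r a • mono κ₁ r) B := by
    rw [← tensorFun_mono (hφ j)]
    funext w
    simp only [tensorFun, Pi.sub_apply, Pi.smul_apply, smul_eq_mul]
    ring
  rw [hsplit]
  refine sub_mem (sub_mem (Submodule.smul_mem _ _ (vdm_update_sub_mem_monoSpan κ j ω))
    (Submodule.smul_mem _ _ ?_)) (Submodule.smul_mem _ _ ?_)
  · refine tensorFun_mem_monoSpan (fun m hm n hn => ?_) (mono_mem_monoSpan κ₁ r.lt_succ_self)
      (vdm_update_sub_mem_monoSpan κ₂ s b)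
    exact exists_lt_eq_append hκ₁ hκ₂ hκ hφ (Nat.lt_succ_iff.1 hm) hn.le (Or.inr hn)
  · refine tensorFun_mem_monoSpan (fun m hm n hn => ?_) (vdm_update_sub_mem_monoSpan κ₁ r a)
      (vdm_update_mem_monoSpan κ₂ s b)
    exact exists_lt_eq_append hκ₁ hκ₂ hκ hφ hm.le (Nat.lt_succ_iff.1 hn) (Or.inl hm)

theorem vdm_update_append_mul_eq (hκ₁ : IsGLexEnum κ₁) (hκ₂ : IsGLexEnum κ₂)
    (hκ : IsGLexEnum κ) (hφ : ∀ j, κ j = Fin.append (κ₁ (φ₁ j)) (κ₂ (φ₂ j)))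
    (a : ℕ → Fin p₁ → ℂ) (b : ℕ → Fin p₂ → ℂ) {ω : ℕ → Fin (p₁ + p₂) → ℂ}
    (hω : ∀ j, ω j = Fin.append (a (φ₁ j)) (b (φ₂ j))) {j : ℕ} (hωj : vdm κ j ω ≠ 0)
    (z₁ : Fin p₁ → ℂ) (z₂ : Fin p₂ → ℂ) :
    vdm κ (j + 1) (Function.update ω j (Fin.append z₁ z₂)) *
        (vdm κ₁ (φ₁ j) a * vdm κ₂ (φ₂ j) b) =
      vdm κ j ω * (vdm κ₁ (φ₁ j + 1) (Function.update a (φ₁ j) z₁) *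
        vdm κ₂ (φ₂ j + 1) (Function.update b (φ₂ j) z₂)) := by
  refine sub_eq_zero.1 ?_
  have hF := eq_zero_of_mem_monoSpan (vdm_update_mul_sub_mem_monoSpan hκ₁ hκ₂ hκ hφ a b ω j) hωj
    fun M hM => ?_
  · simpa using congrFun hF (Fin.append z₁ z₂)
  have hABM : vdm κ₁ (φ₁ j + 1) (Function.update a (φ₁ j) (a (φ₁ M))) *
      vdm κ₂ (φ₂ j + 1) (Function.update b (φ₂ j) (b (φ₂ M))) = 0 := by
    rcases lt_or_lt_of_lt_of_eq_append hκ₁ hκ₂ hκ hφ hM with h | h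
    · exact mul_eq_zero_of_left (vdm_update_self_of_lt κ₁ a h) _
    · exact mul_eq_zero_of_right _ (vdm_update_self_of_lt κ₂ b h)
  simp only [Pi.sub_apply, Pi.smul_apply, smul_eq_mul, vdm_update_self_of_lt κ ω hM]
  rw [hω M, tensorFun_append, hABM]
  ring

theorem vdm_ne_zero_of_eq_append (hκ₁ : IsGLexEnum κ₁) (hκ₂ : IsGLexEnum κ₂)
    (hκ : IsGLexEnum κ) (hφ : ∀ j, κ j = Fin.append (κ₁ (φ₁ j)) (κ₂ (φ₂ j)))
    {a : ℕ → Fin p₁ → ℂ} {b : ℕ → Fin p₂ → ℂ} (ha : ∀ j, 1 ≤ j → vdm κ₁ j a ≠ 0)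
    (hb : ∀ j, 1 ≤ j → vdm κ₂ j b ≠ 0) {ω : ℕ → Fin (p₁ + p₂) → ℂ}
    (hω : ∀ j, ω j = Fin.append (a (φ₁ j)) (b (φ₂ j))) (j : ℕ) : vdm κ j ω ≠ 0 := by
  induction j with
  | zero => simp [vdm_zero]
  | succ j ih =>
    -- the identity at `z = ω_j`, where all three updates are trivial
    have h := vdm_update_append_mul_eq hκ₁ hκ₂ hκ hφ a b hω ih (a (φ₁ j)) (b (φ₂ j))
    simp only [← hω j, Function.update_eq_self] at h
    intro h0
    rw [h0, zero_mul] at h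
    exact mul_ne_zero ih
      (mul_ne_zero (vdm_ne_zero_of_one_le ha _) (vdm_ne_zero_of_one_le hb _)) h.symm

end Intertwining

theorem vdm_intertwining_identities_general {p₁ p₂ : ℕ}
    (κ₁ : ℕ → Fin p₁ → ℕ) (κ₂ : ℕ → Fin p₂ → ℕ) (κ : ℕ → Fin (p₁ + p₂) → ℕ)
    (hκ₁ : IsGLexEnum κ₁) (hκ₂ : IsGLexEnum κ₂) (hκ : IsGLexEnum κ)
    (φ₁ φ₂ : ℕ → ℕ)
    (hφ : ∀ j : ℕ, κ j = Fin.append (κ₁ (φ₁ j)) (κ₂ (φ₂ j)))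
    (a : ℕ → Fin p₁ → ℂ) (b : ℕ → Fin p₂ → ℂ)
    (ha : ∀ j : ℕ, 1 ≤ j → vdm κ₁ j a ≠ 0)
    (hb : ∀ j : ℕ, 1 ≤ j → vdm κ₂ j b ≠ 0)
    (ω : ℕ → Fin (p₁ + p₂) → ℂ)
    (hω : ∀ j : ℕ, ω j = Fin.append (a (φ₁ j)) (b (φ₂ j)))
    (j : ℕ) (r s : ℕ) (hr : r = φ₁ j) (hs : s = φ₂ j)
    (z₁ : Fin p₁ → ℂ) (z₂ : Fin p₂ → ℂ) :
    (0 < r → 0 < s →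
      vdm κ (j + 1) (Function.update ω j (Fin.append z₁ z₂)) *
          vdm κ₁ r a * vdm κ₂ s b =
        vdm κ j ω * vdm κ₁ (r + 1) (Function.update a r z₁) *
          vdm κ₂ (s + 1) (Function.update b s z₂)) ∧
    (0 < r → s = 0 →
      vdm κ (j + 1) (Function.update ω j (Fin.append z₁ z₂)) * vdm κ₁ r a =
        vdm κ j ω * vdm κ₁ (r + 1) (Function.update a r z₁)) ∧
    (r = 0 → 0 < s →
      vdm κ (j + 1) (Function.update ω j (Fin.append z₁ z₂)) * vdm κ₂ s b =
        vdm κ j ω * vdm κ₂ (s + 1) (Function.update b s z₂)) := by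
  subst hr hs
  have h := vdm_update_append_mul_eq hκ₁ hκ₂ hκ hφ a b hω
    (vdm_ne_zero_of_eq_append hκ₁ hκ₂ hκ hφ ha hb hω j) z₁ z₂
  refine ⟨fun _ _ => by linear_combination h, fun _ hs => ?_, fun hr _ => ?_⟩
  · rw [hs, vdm_zero, vdm_one hκ₂.apply_zero] at h
    linear_combination h
  · rw [hr, vdm_zero, vdm_one hκ₁.apply_zero] at h
    linear_combination h

/-- Vandermonde identities for the intertwining sequence `Ω = A ⊕ B`:
with `r = φ₁(j)` and `s = φ₂(j)`, the determinant `vdm(ω_0,…,ω_{j-1}, z)` factorizes through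
the univariate-block determinants of `A` and `B`, in the three cases
`r,s > 0`; `r > 0, s = 0`; `r = 0, s > 0`. -/
theorem vdm_intertwining_identities {p₁ p₂ : ℕ} (hp₁ : 1 ≤ p₁) (hp₂ : 1 ≤ p₂)
    (κ₁ : ℕ → Fin p₁ → ℕ) (κ₂ : ℕ → Fin p₂ → ℕ) (κ : ℕ → Fin (p₁ + p₂) → ℕ)
    (hκ₁ : IsGLexEnum κ₁) (hκ₂ : IsGLexEnum κ₂) (hκ : IsGLexEnum κ)
    (φ₁ φ₂ : ℕ → ℕ)
    (hφ : ∀ j : ℕ, κ j = Fin.append (κ₁ (φ₁ j)) (κ₂ (φ₂ j)))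
    (a : ℕ → Fin p₁ → ℂ) (b : ℕ → Fin p₂ → ℂ)
    (ha : ∀ j : ℕ, 1 ≤ j → vdm κ₁ j a ≠ 0)
    (hb : ∀ j : ℕ, 1 ≤ j → vdm κ₂ j b ≠ 0)
    (ω : ℕ → Fin (p₁ + p₂) → ℂ)
    (hω : ∀ j : ℕ, ω j = Fin.append (a (φ₁ j)) (b (φ₂ j)))
    (j : ℕ) (hj : 1 ≤ j) (r s : ℕ) (hr : r = φ₁ j) (hs : s = φ₂ j)
    (z₁ : Fin p₁ → ℂ) (z₂ : Fin p₂ → ℂ) :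
    (0 < r → 0 < s →
      vdm κ (j + 1) (Function.update ω j (Fin.append z₁ z₂)) *
          vdm κ₁ r a * vdm κ₂ s b =
        vdm κ j ω * vdm κ₁ (r + 1) (Function.update a r z₁) *
          vdm κ₂ (s + 1) (Function.update b s z₂)) ∧
    (0 < r → s = 0 →
      vdm κ (j + 1) (Function.update ω j (Fin.append z₁ z₂)) * vdm κ₁ r a =
        vdm κ j ω * vdm κ₁ (r + 1) (Function.update a r z₁)) ∧
    (r = 0 → 0 < s →
      vdm κ (j + 1) (Function.update ω j (Fin.append z₁ z₂)) * vdm κ₂ s b =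
        vdm κ j ω * vdm κ₂ (s + 1) (Function.update b s z₂)) :=
  vdm_intertwining_identities_general κ₁ κ₂ κ hκ₁ hκ₂ hκ φ₁ φ₂ hφ a b ha hb ω hω j r s hr hs z₁ z₂

end PseudoLeja
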